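/- arXiv:2501.11530 — 4 statements merged into one kernel-verified Lean document; each statement's English description precedes it below -/
import Mathlib

section
/- For all positive integers m and n there exist constants C > 0 and κ > 0 with the following property: for every real number T ≥ 1, every m×n matrix A with integer entries all of absolute value at most T, and every vector v ∈ ℝⁿ, there exists a vector w ∈ ℝⁿ such that A·w = 0 (viewing A as a real matrix) and ‖v − w‖ ≤ C · T^κ · ‖A·v‖, where ‖·‖ denotes the Euclidean norms on ℝⁿ and ℝᵐ. -/
/-!
Let `L` be the real linear map of `A` and `B = L† L`, the Gram matrix `AᵀA`, whose integer entries
are `O(T²)`. Its characteristic polynomial factors as `X ^ k * q` with `q` an integer polynomial,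
`q(0) ≠ 0`, and coefficients `O(T^{2n})`; by Cayley–Hamilton `B ^ k q(B) = 0`. Since `B` maps
everything into `(ker L)ᗮ` and is injective there, `q(B) u = 0` for every `u ⊥ ker L`, that is
`q(0) u = -r(B) (B u)` with `r = (q - q(0)) / X`. As `q(0)` is a nonzero integer, `|q(0)| ≥ 1`,
so `‖u‖ ≤ ‖r(B)‖ ‖L†‖ ‖L u‖`, which is polynomial in `T`. Take `w` to be the orthogonal projection
of `v` onto `ker L`.
-/

open Polynomial
open scoped InnerProduct

namespace Polynomial

variable {R : Type*} [NormedCommRing R]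

theorem norm_coeff_mul_le_of_natDegree_le_one {f g : R[X]} (hf : f.natDegree ≤ 1) {b c : ℝ}
    (hfb : ∀ j, ‖f.coeff j‖ ≤ b) (hgc : ∀ j, ‖g.coeff j‖ ≤ c) (hc : 0 ≤ c) (j : ℕ) :
    ‖(f * g).coeff j‖ ≤ 2 * b * c := by
  have hXg : ‖(X * g).coeff j‖ ≤ c := by
    rcases j with _ | j
    · simpa using hc
    · simpa [coeff_X_mul] using hgc j
  have hb : 0 ≤ b := (norm_nonneg _).trans (hfb 0)
  rw [eq_X_add_C_of_natDegree_le_one hf, add_mul, coeff_add, mul_assoc, coeff_C_mul, coeff_C_mul]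
  calc _ ≤ ‖f.coeff 1‖ * ‖(X * g).coeff j‖ + ‖f.coeff 0‖ * ‖g.coeff j‖ :=
        (norm_add_le _ _).trans (add_le_add (norm_mul_le _ _) (norm_mul_le _ _))
    _ ≤ b * c + b * c := by gcongr <;> apply_assumption
    _ = 2 * b * c := by ring

theorem norm_coeff_prod_le [NormOneClass R] {ι : Type*} (s : Finset ι) (f : ι → R[X]) {b : ℝ}
    (hb : 0 ≤ b) (hdeg : ∀ i ∈ s, (f i).natDegree ≤ 1)
    (hcoeff : ∀ i ∈ s, ∀ j, ‖(f i).coeff j‖ ≤ b) (j : ℕ) :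
    ‖(∏ i ∈ s, f i).coeff j‖ ≤ (2 * b) ^ s.card := by
  induction s using Finset.cons_induction generalizing j with
  | empty => rcases j with _ | j <;> simp [coeff_one]
  | cons a s ha ih =>
    rw [Finset.prod_cons, Finset.card_cons, pow_succ']
    exact norm_coeff_mul_le_of_natDegree_le_one (hdeg a (s.mem_cons_self a))
      (hcoeff a (s.mem_cons_self a)) (ih (fun i hi => hdeg i (Finset.mem_cons_of_mem hi))
        (fun i hi => hcoeff i (Finset.mem_cons_of_mem hi))) (by positivity) j

theorem norm_aeval_le {𝕜 A : Type*} [NormedField 𝕜] [SeminormedRing A] [NormedAlgebra 𝕜 A]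
    (h1 : ‖(1 : A)‖ ≤ 1) {p : 𝕜[X]} {d : ℕ} (hd : p.natDegree ≤ d) {c : ℝ}
    (hc : ∀ i, ‖p.coeff i‖ ≤ c) {a : A} {r : ℝ} (ha : ‖a‖ ≤ r) (hr : 1 ≤ r) :
    ‖aeval a p‖ ≤ (d + 1) * c * r ^ d := by
  have hc0 : 0 ≤ c := (norm_nonneg _).trans (hc 0)
  have hpow : ∀ i ≤ d, ‖a ^ i‖ ≤ r ^ d := fun i hi => by
    rcases i.eq_zero_or_pos with rfl | hi0
    · simpa using h1.trans (one_le_pow₀ hr)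
    · exact (norm_pow_le' a hi0).trans <| (pow_le_pow_left₀ (norm_nonneg a) ha i).trans
        (pow_le_pow_right₀ hr hi)
  rw [aeval_eq_sum_range' (Nat.lt_succ_of_le hd)]
  calc _ ≤ ∑ i ∈ Finset.range (d + 1), ‖p.coeff i‖ * ‖a ^ i‖ :=
        (norm_sum_le _ _).trans (Finset.sum_le_sum fun i _ => norm_smul_le _ _)
    _ ≤ ∑ _i ∈ Finset.range (d + 1), c * r ^ d :=
        Finset.sum_le_sum fun i hi => mul_le_mul (hc i)
          (hpow i (Nat.lt_succ_iff.mp (Finset.mem_range.mp hi))) (norm_nonneg _) hc0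
    _ = (d + 1) * c * r ^ d := by simp [mul_assoc]

theorem exists_eq_X_pow_mul_coeff_zero_ne_zero {R : Type*} [Ring R] {p : R[X]} (hp : p ≠ 0) :
    ∃ k q, p = X ^ k * q ∧ q.coeff 0 ≠ 0 := by
  obtain ⟨q, hpq, hq⟩ := p.exists_eq_pow_rootMultiplicity_mul_and_not_dvd hp 0
  exact ⟨_, q, by simpa using hpq, by simpa [X_dvd_iff] using hq⟩

end Polynomial

namespace Matrix

section NormedEntries

variable {R : Type*} [NormedCommRing R] [NormOneClass R] {n : Type*} [Fintype n] [DecidableEq n]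

theorem norm_coeff_charmatrix_le {M : Matrix n n R} {b : ℝ} (hb : 1 ≤ b)
    (hM : ∀ i j, ‖M i j‖ ≤ b) (i j : n) (k : ℕ) : ‖(charmatrix M i j).coeff k‖ ≤ b := by
  rcases eq_or_ne i j with rfl | hij
  · rcases k with _ | _ | k <;> simp [charmatrix_apply_eq, coeff_X, coeff_C, hM, hb]
    linarith
  · rcases k with _ | k <;> simp [charmatrix_apply_ne _ _ _ hij, coeff_C, hM]
    linarith

theorem norm_coeff_charpoly_le (M : Matrix n n R) {b : ℝ} (hb : 1 ≤ b)
    (hM : ∀ i j, ‖M i j‖ ≤ b) (k : ℕ) :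
    ‖M.charpoly.coeff k‖ ≤ (Fintype.card n).factorial * (2 * b) ^ Fintype.card n := by
  rw [charpoly, det_apply, finsetSum_coeff, ← Fintype.card_perm, ← nsmul_eq_mul,
    ← Finset.card_univ, ← Finset.sum_const]
  refine (norm_sum_le _ _).trans (Finset.sum_le_sum fun σ _ => ?_)
  rw [coeff_smul, norm_units_zsmul]
  exact norm_coeff_prod_le _ _ (by linarith)
    (fun i _ => (charmatrix_apply_natDegree_le _ _).trans (by split_ifs <;> simp))
    (fun i _ => norm_coeff_charmatrix_le hb hM _ _) k

end NormedEntries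

theorem norm_mul_apply_le {R l m n : Type*} [SeminormedRing R] [Fintype m] {A : Matrix l m R}
    {B : Matrix m n R} {a b : ℝ} (hA : ∀ i j, ‖A i j‖ ≤ a) (hB : ∀ i j, ‖B i j‖ ≤ b)
    (i : l) (k : n) : ‖(A * B) i k‖ ≤ Fintype.card m * (a * b) := by
  rw [mul_apply, ← nsmul_eq_mul, ← Finset.card_univ, ← Finset.sum_const]
  exact (norm_sum_le _ _).trans (Finset.sum_le_sum fun j _ => (norm_mul_le _ _).trans
    (mul_le_mul (hA i j) (hB j k) (norm_nonneg _) ((norm_nonneg _).trans (hA i j))))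

theorem exists_aeval_map_intCast_eq_zero {n : Type*} [Fintype n] [DecidableEq n]
    (M : Matrix n n ℤ) {b : ℝ} (hb : 1 ≤ b) (hM : ∀ i j, ‖M i j‖ ≤ b) :
    ∃ k, ∃ q : ℝ[X], aeval (M.map (Int.castRingHom ℝ)) (X ^ k * q) = 0 ∧
      1 ≤ ‖q.coeff 0‖ ∧ q.natDegree ≤ Fintype.card n ∧
      ∀ i, ‖q.coeff i‖ ≤ (Fintype.card n).factorial * (2 * b) ^ Fintype.card n := by
  obtain ⟨k, q, hpq, hq0⟩ := exists_eq_X_pow_mul_coeff_zero_ne_zero M.charpoly_monic.ne_zero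
  refine ⟨k, q.map (Int.castRingHom ℝ), ?_, ?_, ?_, fun i => ?_⟩
  · rw [← Polynomial.map_X (Int.castRingHom ℝ), ← Polynomial.map_pow, ← Polynomial.map_mul, ← hpq,
      ← charpoly_map, aeval_self_charpoly]
  · simp only [coeff_map, eq_intCast, Real.norm_eq_abs]
    exact_mod_cast Int.one_le_abs hq0
  · exact natDegree_map_le.trans <| (natDegree_le_of_dvd ⟨X ^ k, by rw [hpq, mul_comm]⟩
      M.charpoly_monic.ne_zero).trans M.charpoly_natDegree_eq_dim.le
  · have hcoeff : M.charpoly.coeff (i + k) = q.coeff i := by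
      rw [hpq, X_pow_mul, coeff_mul_X_pow]
    rw [coeff_map, eq_intCast, Int.norm_cast_real, ← hcoeff]
    exact norm_coeff_charpoly_le M hb hM _

theorem norm_toContinuousLinearMap_toEuclideanLin_le {m n : Type*} [Fintype m] [Fintype n]
    [DecidableEq n] (A : Matrix m n ℝ) {c : ℝ} (hc : 0 ≤ c) (hA : ∀ i j, |A i j| ≤ c) :
    ‖LinearMap.toContinuousLinearMap (toEuclideanLin A)‖ ≤
      √(Fintype.card m * Fintype.card n) * c := by
  refine ContinuousLinearMap.opNorm_le_bound _ (by positivity) fun x => ?_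
  have hx : ∑ j, x j ^ 2 = ‖x‖ ^ 2 := by simp [EuclideanSpace.norm_sq_eq]
  have hrow : ∀ i, (∑ j, A i j * x j) ^ 2 ≤ Fintype.card n * c ^ 2 * ‖x‖ ^ 2 := fun i => by
    calc (∑ j, A i j * x j) ^ 2 ≤ (∑ j, A i j ^ 2) * ∑ j, x j ^ 2 :=
          Finset.sum_mul_sq_le_sq_mul_sq _ _ _
      _ ≤ (∑ _j : n, c ^ 2) * ‖x‖ ^ 2 := by
          rw [hx]
          refine mul_le_mul_of_nonneg_right (Finset.sum_le_sum fun j _ => ?_) (by positivity)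
          exact sq_le_sq' (abs_le.mp (hA i j)).1 (abs_le.mp (hA i j)).2
      _ = _ := by simp
  rw [← pow_le_pow_iff_left₀ (norm_nonneg _) (by positivity) two_ne_zero, mul_pow, mul_pow,
    Real.sq_sqrt (by positivity), EuclideanSpace.norm_sq_eq]
  calc ∑ i, ‖(toEuclideanLin A x) i‖ ^ 2 = ∑ i, (∑ j, A i j * x j) ^ 2 := by
        simp [mulVec, dotProduct]
    _ ≤ ∑ _i : m, Fintype.card n * c ^ 2 * ‖x‖ ^ 2 := Finset.sum_le_sum fun i _ => hrow i
    _ = _ := by simp; ring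

theorem adjoint_comp_self_toEuclideanLin {𝕜 m n : Type*} [RCLike 𝕜] [Fintype m] [DecidableEq m]
    [Fintype n] [DecidableEq n] (A : Matrix m n 𝕜) :
    (LinearMap.toContinuousLinearMap (toEuclideanLin A))† ∘L
      LinearMap.toContinuousLinearMap (toEuclideanLin A) =
        toEuclideanCLM (n := n) (𝕜 := 𝕜) (Aᴴ * A) := by
  ext x : 1
  change _ = toEuclideanLin (Aᴴ * A) x
  simp [← LinearMap.adjoint_toContinuousLinearMap, ← toEuclideanLin_conjTranspose_eq_adjoint]

end Matrix

namespace ContinuousLinearMap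

variable {𝕜 E F : Type*} [RCLike 𝕜] [NormedAddCommGroup E] [InnerProductSpace 𝕜 E]
  [CompleteSpace E] [NormedAddCommGroup F] [InnerProductSpace 𝕜 F] [CompleteSpace F]

theorem adjoint_apply_mem_orthogonal_ker (L : E →L[𝕜] F) (y : F) : (L†) y ∈ L.kerᗮ := by
  rw [orthogonal_ker]
  exact Submodule.le_topologicalClosure _ ⟨y, rfl⟩

theorem eq_zero_of_adjoint_comp_self_pow_apply_eq_zero (L : E →L[𝕜] F) {u : E}
    (hu : u ∈ L.kerᗮ) {k : ℕ} (hk : ((L† ∘L L) ^ k) u = 0) : u = 0 := by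
  induction k generalizing u with
  | zero => simpa using hk
  | succ k ih =>
    have hBu : (L† ∘L L) u = 0 :=
      ih (adjoint_apply_mem_orthogonal_ker L (L u)) (by rwa [pow_succ, mul_apply_eq_comp] at hk)
    have huK : u ∈ L.ker := by rw [← ker_adjoint_comp_self]; exact hBu
    exact Submodule.disjoint_def.mp L.ker.orthogonal_disjoint u huK hu

theorem norm_coeff_zero_mul_norm_le (L : E →L[𝕜] F) {q : 𝕜[X]} {k : ℕ}
    (hq : aeval (L† ∘L L) (X ^ k * q) = 0) {u : E} (hu : u ∈ L.kerᗮ) :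
    ‖q.coeff 0‖ * ‖u‖ ≤ ‖aeval (L† ∘L L) q.divX‖ * ‖L†‖ * ‖L u‖ := by
  set B := L† ∘L L
  set r := q.divX
  have hqB : aeval B q = B * aeval B r + algebraMap 𝕜 _ (q.coeff 0) := by
    nth_rewrite 1 [← X_mul_divX_add q]
    rw [map_add, map_mul, aeval_X, aeval_C]
  have hrB : B * aeval B r = aeval B r * B := by
    simpa using ((Commute.all X r).map (aeval B)).eq
  have hz : aeval B q u = 0 := by
    refine eq_zero_of_adjoint_comp_self_pow_apply_eq_zero L ?_ (k := k) ?_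
    · rw [hqB, add_apply, mul_apply_eq_comp]
      exact add_mem (adjoint_apply_mem_orthogonal_ker L _) (by simpa using L.kerᗮ.smul_mem _ hu)
    · rw [← mul_apply_eq_comp]
      simpa using DFunLike.congr_fun hq u
  have hu' : q.coeff 0 • u = -aeval B r ((L†) (L u)) := by
    rw [hqB, add_apply, hrB, mul_apply_eq_comp] at hz
    simpa [B, eq_neg_iff_add_eq_zero, add_comm] using hz
  calc ‖q.coeff 0‖ * ‖u‖ = ‖aeval B r ((L†) (L u))‖ := by rw [← norm_smul, hu', norm_neg]
    _ ≤ ‖aeval B r‖ * (‖L†‖ * ‖L u‖) := (le_opNorm _ _).trans (by gcongr; exact le_opNorm _ _)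
    _ = _ := by rw [mul_assoc]

theorem norm_le_of_mem_orthogonal_ker (L : E →L[𝕜] F) {k d : ℕ} {q : 𝕜[X]}
    (hq : aeval (L† ∘L L) (X ^ k * q) = 0) (hq0 : 1 ≤ ‖q.coeff 0‖) (hd : q.natDegree ≤ d)
    {c a : ℝ} (hc : ∀ i, ‖q.coeff i‖ ≤ c) (hL : ‖L‖ ≤ a) (ha : 1 ≤ a) {u : E}
    (hu : u ∈ L.kerᗮ) : ‖u‖ ≤ (d + 1) * c * a ^ (2 * d + 1) * ‖L u‖ := by
  have hadj : ‖L†‖ ≤ a := by rwa [LinearIsometryEquiv.norm_map]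
  have hB : ‖L† ∘L L‖ ≤ a ^ 2 := by
    rw [norm_adjoint_comp_self, sq]
    exact mul_le_mul hL hL (norm_nonneg _) (by linarith)
  have hr : ‖aeval (L† ∘L L) q.divX‖ ≤ (d + 1) * c * (a ^ 2) ^ d :=
    norm_aeval_le norm_id_le (natDegree_divX_le.trans hd)
      (fun i => by rw [coeff_divX]; exact hc _) hB (one_le_pow₀ ha)
  calc ‖u‖ ≤ ‖q.coeff 0‖ * ‖u‖ := le_mul_of_one_le_left (norm_nonneg _) hq0
    _ ≤ ‖aeval (L† ∘L L) q.divX‖ * ‖L†‖ * ‖L u‖ := L.norm_coeff_zero_mul_norm_le hq hu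
    _ ≤ (d + 1) * c * (a ^ 2) ^ d * a * ‖L u‖ := by
      gcongr
      exact hr.trans' (norm_nonneg _)
    _ = (d + 1) * c * a ^ (2 * d + 1) * ‖L u‖ := by ring

end ContinuousLinearMap

namespace Matrix

variable {m n : Type*} [Fintype m] [DecidableEq m] [Fintype n] [DecidableEq n]

theorem norm_le_of_mem_orthogonal_ker_of_int (A : Matrix m n ℤ) {T : ℝ} (hT : 1 ≤ T)
    (hA : ∀ i j, |(A i j : ℝ)| ≤ T) {u : EuclideanSpace ℝ n}
    (hu : u ∈ (toEuclideanLin (A.map (Int.cast : ℤ → ℝ))).kerᗮ) :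
    ‖u‖ ≤ (Fintype.card n + 1).factorial * (2 * (Fintype.card m + 1)) ^ Fintype.card n *
      (1 + Fintype.card m * Fintype.card n) ^ (2 * Fintype.card n + 1) *
      T ^ (4 * Fintype.card n + 1) * ‖toEuclideanLin (A.map (Int.cast : ℤ → ℝ)) u‖ := by
  set L := LinearMap.toContinuousLinearMap (toEuclideanLin (A.map (Int.cast : ℤ → ℝ)))
  have hA_norm : ∀ i j, ‖A i j‖ ≤ T := fun i j => (Int.norm_eq_abs _).trans_le (hA i j)
  have hb : 1 ≤ (Fintype.card m + 1 : ℝ) * T ^ 2 := by nlinarith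
  obtain ⟨k, q, hq, hq0, hd, hc⟩ := (Aᵀ * A).exists_aeval_map_intCast_eq_zero hb
    fun i j => (norm_mul_apply_le (fun i j => hA_norm j i) hA_norm i j).trans (by nlinarith)
  rw [Matrix.map_mul, transpose_map] at hq
  have hLq : aeval (L† ∘L L) (X ^ k * q) = 0 := by
    rw [adjoint_comp_self_toEuclideanLin, aeval_algHom_apply, conjTranspose_eq_transpose_of_trivial]
    exact (congrArg _ hq).trans (map_zero _)
  have hL : ‖L‖ ≤ (1 + Fintype.card m * Fintype.card n) * T := by
    refine ((A.map (Int.cast : ℤ → ℝ)).norm_toContinuousLinearMap_toEuclideanLin_le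
      (by linarith) hA).trans ?_
    gcongr
    exact Real.sqrt_le_iff.mpr ⟨by positivity, by nlinarith⟩
  refine (L.norm_le_of_mem_orthogonal_ker hLq hq0 hd hc hL
    (one_le_mul_of_one_le_of_one_le (le_add_of_nonneg_right (by positivity)) hT) hu).trans_eq ?_
  rw [show L u = toEuclideanLin (A.map (Int.cast : ℤ → ℝ)) u from rfl, Nat.factorial_succ]
  push_cast
  simp only [mul_pow, ← pow_mul]
  ring

end Matrix

theorem near_kernel_of_small_image_general (m n : ℕ) :
    ∃ C > (0 : ℝ), ∃ κ > (0 : ℝ),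
      ∀ T : ℝ, 1 ≤ T →
        ∀ A : Matrix (Fin m) (Fin n) ℤ, (∀ i j, (|A i j| : ℝ) ≤ T) →
          ∀ v : EuclideanSpace ℝ (Fin n),
            ∃ w : EuclideanSpace ℝ (Fin n),
              Matrix.toEuclideanLin (A.map (Int.cast : ℤ → ℝ)) w = 0 ∧
              ‖v - w‖ ≤ C * T ^ κ *
                ‖Matrix.toEuclideanLin (A.map (Int.cast : ℤ → ℝ)) v‖ := by
  refine ⟨(n + 1).factorial * (2 * (m + 1)) ^ n * (1 + m * n) ^ (2 * n + 1), by positivity,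
    (4 * n + 1 : ℕ), by positivity, fun T hT A hA v => ?_⟩
  set K := LinearMap.ker (Matrix.toEuclideanLin (A.map (Int.cast : ℤ → ℝ)))
  have hw : K.starProjection v ∈ K := K.starProjection_apply_mem v
  refine ⟨K.starProjection v, hw, ?_⟩
  have hvw := A.norm_le_of_mem_orthogonal_ker_of_int hT hA (K.sub_starProjection_mem_orthogonal v)
  rw [map_sub, LinearMap.mem_ker.mp hw, sub_zero, Fintype.card_fin, Fintype.card_fin] at hvw
  rwa [Real.rpow_natCast]

/-- Quantitative linear algebra lemma: if an integer matrix `A` with entries of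
absolute value at most `T` almost annihilates a vector `v`, then some vector `w`
in the kernel of `A` is within distance `C ⬝ T^κ ⬝ ‖A v‖` of `v`. -/
theorem near_kernel_of_small_image (m n : ℕ) (hm : 0 < m) (hn : 0 < n) :
    ∃ C > (0 : ℝ), ∃ κ > (0 : ℝ),
      ∀ T : ℝ, 1 ≤ T →
        ∀ A : Matrix (Fin m) (Fin n) ℤ, (∀ i j, (|A i j| : ℝ) ≤ T) →
          ∀ v : EuclideanSpace ℝ (Fin n),
            ∃ w : EuclideanSpace ℝ (Fin n),
              Matrix.toEuclideanLin (A.map (Int.cast : ℤ → ℝ)) w = 0 ∧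
              ‖v - w‖ ≤ C * T ^ κ *
                ‖Matrix.toEuclideanLin (A.map (Int.cast : ℤ → ℝ)) v‖ :=
  near_kernel_of_small_image_general m n
end

section
/- Let δ ∈ (0, 1/100) and τ ≥ 1. For all q₁, q₂ ∈ Q_G(δ, τ) and all choices of signs ε₁, ε₂ ∈ {+1, −1}, the product q₁^{ε₁} · q₂^{ε₂} lies in Q_G(10δ, τ). -/
/-- The lower unipotent `ū_s = [[1,0],[s,1]]` as an element of SL(2,ℝ). -/
noncomputable def lowU (s : ℝ) : Matrix.SpecialLinearGroup (Fin 2) ℝ :=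
  ⟨!![1, 0; s, 1], by simp [Matrix.det_fin_two_of]⟩

/-- The upper unipotent `u_r = [[1,r],[0,1]]` as an element of SL(2,ℝ). -/
noncomputable def upU (r : ℝ) : Matrix.SpecialLinearGroup (Fin 2) ℝ :=
  ⟨!![1, r; 0, 1], by simp [Matrix.det_fin_two_of]⟩

/-- The diagonal `a_w = [[e^{w/2},0],[0,e^{-w/2}]]` as an element of SL(2,ℝ). -/
noncomputable def diagA (w : ℝ) : Matrix.SpecialLinearGroup (Fin 2) ℝ :=
  ⟨!![Real.exp (w / 2), 0; 0, Real.exp (-(w / 2))], by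
    simp [Matrix.det_fin_two_of, ← Real.exp_add]⟩

/-- The box `Q_G(δ,τ) = ū_{[-δ/τ,δ/τ]} ⬝ a_{[-δ,δ]} ⬝ u_{[-δ,δ]}` in SL(2,ℝ). -/
def QG (δ τ : ℝ) : Set (Matrix.SpecialLinearGroup (Fin 2) ℝ) :=
  {g | ∃ s w v : ℝ, |s| ≤ δ / τ ∧ |w| ≤ δ ∧ |v| ≤ δ ∧ g = lowU s * diagA w * upU v}

/-!
Writing `x = vs`, the one non-trivial relation is
`u_v ū_s = ū_{s/(1+x)} a_{2 log(1+x)} u_{v/(1+x)}` for `1 + x > 0`; together with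
`a_w ū_s = ū_{s e^{-w}} a_w` and `u_v a_w = a_w u_{v e^{-w}}` it brings `q₁ q₂` and `q⁻¹` back
to the form `ū · a · u`. For parameters of size at most `1/10` the distortion factors
`e^{±w}/(1+x)` are below `2` and `|log (1 + x)| ≤ 2|x|` is quadratically small, so inversion
maps `Q_G(δ, τ)` into `Q_G(2δ, τ)` and products map `Q_G(δ, τ) × Q_G(δ, τ)` into `Q_G(3δ, τ)`;
hence `q₁^{±1} q₂^{±1} ∈ Q_G(6δ, τ)`.
-/

open Real

section Algebra

open Matrix

lemma coe_lowU (s : ℝ) : (lowU s : Matrix (Fin 2) (Fin 2) ℝ) = !![1, 0; s, 1] := rfl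

lemma coe_upU (v : ℝ) : (upU v : Matrix (Fin 2) (Fin 2) ℝ) = !![1, v; 0, 1] := rfl

lemma coe_diagA (w : ℝ) :
    (diagA w : Matrix (Fin 2) (Fin 2) ℝ) = !![exp (w / 2), 0; 0, exp (-(w / 2))] := rfl

lemma lowU_add (a b : ℝ) : lowU (a + b) = lowU a * lowU b := by
  apply Subtype.ext
  simp [coe_lowU]

lemma upU_add (a b : ℝ) : upU (a + b) = upU a * upU b := by
  apply Subtype.ext
  simp [coe_upU, add_comm]

lemma diagA_add (a b : ℝ) : diagA (a + b) = diagA a * diagA b := by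
  apply Subtype.ext
  simp [coe_diagA, add_div, exp_add, mul_comm]

lemma lowU_zero : lowU 0 = 1 := by
  apply Subtype.ext
  simp [coe_lowU, one_fin_two]

lemma upU_zero : upU 0 = 1 := by
  apply Subtype.ext
  simp [coe_upU, one_fin_two]

lemma diagA_zero : diagA 0 = 1 := by
  apply Subtype.ext
  simp [coe_diagA, one_fin_two]

lemma lowU_neg (s : ℝ) : lowU (-s) = (lowU s)⁻¹ :=
  eq_inv_of_mul_eq_one_left (by rw [← lowU_add, neg_add_cancel, lowU_zero])

lemma upU_neg (v : ℝ) : upU (-v) = (upU v)⁻¹ :=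
  eq_inv_of_mul_eq_one_left (by rw [← upU_add, neg_add_cancel, upU_zero])

lemma diagA_neg (w : ℝ) : diagA (-w) = (diagA w)⁻¹ :=
  eq_inv_of_mul_eq_one_left (by rw [← diagA_add, neg_add_cancel, diagA_zero])

lemma exp_neg_half (w : ℝ) : exp (-(w / 2)) = exp (-w) * exp (w / 2) := by
  rw [← exp_add]; ring_nf

lemma diagA_mul_lowU (w s : ℝ) : diagA w * lowU s = lowU (s * exp (-w)) * diagA w := by
  apply Subtype.ext
  simp [coe_diagA, coe_lowU, exp_neg_half]
  ring

lemma upU_mul_diagA (v w : ℝ) : upU v * diagA w = diagA w * upU (v * exp (-w)) := by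
  apply Subtype.ext
  simp [coe_diagA, coe_upU, exp_neg_half]
  ring

lemma SL2_coe_mul (A B : SpecialLinearGroup (Fin 2) ℝ) :
    ((A * B : SpecialLinearGroup (Fin 2) ℝ) : Matrix (Fin 2) (Fin 2) ℝ) = A * B := rfl

lemma upU_mul_lowU {v s : ℝ} (h : 0 < 1 + v * s) :
    upU v * lowU s =
      lowU (s / (1 + v * s)) * diagA (2 * log (1 + v * s)) * upU (v / (1 + v * s)) := by
  have hexp : exp (2 * log (1 + v * s) / 2) = 1 + v * s := by
    rw [mul_div_cancel_left₀ _ two_ne_zero, exp_log h]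
  apply Subtype.ext
  simp only [SL2_coe_mul, coe_diagA, coe_lowU, coe_upU, mul_fin_two, exp_neg, hexp,
    EmbeddingLike.apply_eq_iff_eq, vecCons_inj, and_true]
  field_simp
  refine ⟨⟨?_, ?_⟩, ?_, ?_⟩ <;> ring

lemma lowU_diagA_upU_mul {s₁ w₁ v₁ s₂ w₂ v₂ : ℝ} (h : 0 < 1 + v₁ * s₂) :
    lowU s₁ * diagA w₁ * upU v₁ * (lowU s₂ * diagA w₂ * upU v₂) =
      lowU (s₁ + s₂ / (1 + v₁ * s₂) * exp (-w₁)) * diagA (w₁ + 2 * log (1 + v₁ * s₂) + w₂) *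
        upU (v₁ / (1 + v₁ * s₂) * exp (-w₂) + v₂) := by
  calc _ = lowU s₁ * diagA w₁ * (upU v₁ * lowU s₂) * diagA w₂ * upU v₂ := by group
    _ = lowU s₁ * (diagA w₁ * lowU (s₂ / (1 + v₁ * s₂))) * diagA (2 * log (1 + v₁ * s₂)) *
          (upU (v₁ / (1 + v₁ * s₂)) * diagA w₂) * upU v₂ := by
        rw [upU_mul_lowU h]; group
    _ = _ := by
        rw [diagA_mul_lowU, upU_mul_diagA, lowU_add, diagA_add, diagA_add, upU_add]; group

lemma lowU_diagA_upU_inv {s w v : ℝ} (h : 0 < 1 + v * s * exp w) :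
    (lowU s * diagA w * upU v)⁻¹ =
      lowU (-s / (1 + v * s * exp w) * exp w) * diagA (2 * log (1 + v * s * exp w) - w) *
        upU (-v / (1 + v * s * exp w) * exp w) := by
  have hx : -v * (-s * exp w) = v * s * exp w := by ring
  have h' : 0 < 1 + -v * (-s * exp w) := hx ▸ h
  calc _ = upU (-v) * (diagA (-w) * lowU (-s)) := by
        rw [upU_neg, diagA_neg, lowU_neg]; group
    _ = upU (-v) * lowU (-s * exp w) * diagA (-w) := by
        rw [diagA_mul_lowU, neg_neg, mul_assoc]
    _ = lowU (-s * exp w / (1 + v * s * exp w)) * diagA (2 * log (1 + v * s * exp w)) *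
          (upU (-v / (1 + v * s * exp w)) * diagA (-w)) := by
        rw [upU_mul_lowU h', hx, mul_assoc _ (upU _)]
    _ = _ := by
        rw [upU_mul_diagA, neg_neg, sub_eq_add_neg, diagA_add, div_mul_eq_mul_div,
          div_mul_eq_mul_div]
        group

end Algebra

lemma exp_le_one_add_two_mul_abs {w : ℝ} (hw : |w| ≤ 1) : exp w ≤ 1 + 2 * |w| := by
  linarith [(abs_le.mp (abs_exp_sub_one_le hw)).2]

lemma abs_div_one_add_mul_exp_le (a : ℝ) {x w : ℝ} (hx : |x| ≤ 1 / 10) (hw : |w| ≤ 1 / 10) :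
    |a / (1 + x) * exp w| ≤ 2 * |a| := by
  have hx' : 9 / 10 ≤ 1 + x := by linarith [neg_abs_le x]
  rw [abs_mul, abs_div, abs_of_pos (exp_pos w), abs_of_pos (by linarith : 0 < 1 + x)]
  calc |a| / (1 + x) * exp w ≤ |a| / (9 / 10) * (6 / 5) := by
        gcongr
        linarith [exp_le_one_add_two_mul_abs (w := w) (by linarith)]
    _ ≤ 2 * |a| := by linarith [abs_nonneg a]

lemma abs_log_one_add_le {x : ℝ} (hx : |x| ≤ 1 / 2) : |log (1 + x)| ≤ 2 * |x| := by
  have h := abs_log_sub_add_sum_range_le (x := -x) (by rw [abs_neg]; linarith) 0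
  simp only [Finset.range_zero, Finset.sum_empty, zero_add, sub_neg_eq_add, abs_neg,
    pow_one] at h
  calc |log (1 + x)| ≤ |x| / (1 - |x|) := h
    _ ≤ 2 * |x| := by
        rw [div_le_iff₀ (by linarith)]
        nlinarith [abs_nonneg x]

lemma QG_mono {δ δ' τ : ℝ} (hτ : 0 ≤ τ) (h : δ ≤ δ') : QG δ τ ⊆ QG δ' τ := by
  rintro g ⟨s, w, v, hs, hw, hv, rfl⟩
  exact ⟨s, w, v, hs.trans (by gcongr), hw.trans h, hv.trans h, rfl⟩

lemma QG_mul_mem {δ τ : ℝ} (hδ : δ ≤ 1 / 10) (hτ : 1 ≤ τ)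
    {q₁ q₂ : Matrix.SpecialLinearGroup (Fin 2) ℝ} (hq₁ : q₁ ∈ QG δ τ) (hq₂ : q₂ ∈ QG δ τ) :
    q₁ * q₂ ∈ QG (3 * δ) τ := by
  obtain ⟨s₁, w₁, v₁, hs₁, hw₁, hv₁, rfl⟩ := hq₁
  obtain ⟨s₂, w₂, v₂, hs₂, hw₂, hv₂, rfl⟩ := hq₂
  have hδ0 : 0 ≤ δ := (abs_nonneg _).trans hw₁
  have hx : |v₁ * s₂| ≤ δ * δ := by
    rw [abs_mul]
    exact mul_le_mul hv₁ (hs₂.trans (div_le_self hδ0 hτ)) (abs_nonneg _) hδ0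
  have hx' : |v₁ * s₂| ≤ 1 / 10 := hx.trans (by nlinarith)
  rw [lowU_diagA_upU_mul (by linarith [neg_abs_le (v₁ * s₂)])]
  refine ⟨_, _, _, ?_, ?_, ?_, rfl⟩
  · calc |s₁ + s₂ / (1 + v₁ * s₂) * exp (-w₁)|
          ≤ |s₁| + |s₂ / (1 + v₁ * s₂) * exp (-w₁)| := abs_add_le _ _
      _ ≤ |s₁| + 2 * |s₂| := by
          gcongr
          exact abs_div_one_add_mul_exp_le s₂ hx' (by rw [abs_neg]; linarith)
      _ ≤ 3 * δ / τ := by rw [mul_div_assoc]; linarith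
  · calc |w₁ + 2 * log (1 + v₁ * s₂) + w₂| ≤ |w₁| + 2 * (2 * |v₁ * s₂|) + |w₂| := by
          refine (abs_add_three _ _ _).trans ?_
          rw [abs_mul, abs_two]
          linarith [abs_log_one_add_le (hx'.trans (by norm_num))]
      _ ≤ 3 * δ := by nlinarith
  · calc |v₁ / (1 + v₁ * s₂) * exp (-w₂) + v₂|
          ≤ |v₁ / (1 + v₁ * s₂) * exp (-w₂)| + |v₂| := abs_add_le _ _
      _ ≤ 2 * |v₁| + |v₂| := by
          gcongr
          exact abs_div_one_add_mul_exp_le v₁ hx' (by rw [abs_neg]; linarith)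
      _ ≤ 3 * δ := by linarith

lemma QG_inv_mem {δ τ : ℝ} (hδ : δ ≤ 1 / 10) (hτ : 1 ≤ τ)
    {q : Matrix.SpecialLinearGroup (Fin 2) ℝ} (hq : q ∈ QG δ τ) : q⁻¹ ∈ QG (2 * δ) τ := by
  obtain ⟨s, w, v, hs, hw, hv, rfl⟩ := hq
  have hδ0 : 0 ≤ δ := (abs_nonneg _).trans hw
  have hw' : |w| ≤ 1 / 10 := hw.trans hδ
  have hx : |v * s * exp w| ≤ δ * δ * (6 / 5) := by
    rw [abs_mul, abs_mul, abs_of_pos (exp_pos w)]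
    gcongr
    · exact hs.trans (div_le_self hδ0 hτ)
    · linarith [exp_le_one_add_two_mul_abs (w := w) (by linarith)]
  have hx' : |v * s * exp w| ≤ 1 / 10 := hx.trans (by nlinarith)
  rw [lowU_diagA_upU_inv (by linarith [neg_abs_le (v * s * exp w)])]
  refine ⟨_, _, _, ?_, ?_, ?_, rfl⟩
  · calc |-s / (1 + v * s * exp w) * exp w| ≤ 2 * |-s| := abs_div_one_add_mul_exp_le _ hx' hw'
      _ ≤ 2 * δ / τ := by rw [abs_neg, mul_div_assoc]; linarith
  · calc |2 * log (1 + v * s * exp w) - w| ≤ 2 * (2 * |v * s * exp w|) + |w| := by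
          refine (abs_sub _ _).trans ?_
          rw [abs_mul, abs_two]
          linarith [abs_log_one_add_le (hx'.trans (by norm_num))]
      _ ≤ 2 * δ := by nlinarith
  · calc |-v / (1 + v * s * exp w) * exp w| ≤ 2 * |-v| := abs_div_one_add_mul_exp_le _ hx' hw'
      _ ≤ 2 * δ := by rw [abs_neg]; linarith

/-- Products of boxes: for `q₁, q₂ ∈ Q_G(δ,τ)` and signs `ε₁, ε₂ ∈ {±1}`,
`q₁^{ε₁} q₂^{ε₂} ∈ Q_G(10δ, τ)`. -/
theorem QG_mul_QG (δ τ : ℝ) (hδ : δ ∈ Set.Ioo (0 : ℝ) (1 / 100)) (hτ : 1 ≤ τ)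
    (q₁ q₂ : Matrix.SpecialLinearGroup (Fin 2) ℝ)
    (hq₁ : q₁ ∈ QG δ τ) (hq₂ : q₂ ∈ QG δ τ)
    (ε₁ ε₂ : ℤ) (hε₁ : ε₁ = 1 ∨ ε₁ = -1) (hε₂ : ε₂ = 1 ∨ ε₂ = -1) :
    q₁ ^ ε₁ * q₂ ^ ε₂ ∈ QG (10 * δ) τ := by
  have hτ0 : (0 : ℝ) ≤ τ := zero_le_one.trans hτ
  have hzpow : ∀ q ∈ QG δ τ, ∀ ε : ℤ, ε = 1 ∨ ε = -1 → q ^ ε ∈ QG (2 * δ) τ := by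
    rintro q hq ε (rfl | rfl)
    · rw [zpow_one]
      exact QG_mono hτ0 (by linarith [hδ.1]) hq
    · rw [zpow_neg_one]
      exact QG_inv_mem (by linarith [hδ.2]) hτ hq
  exact QG_mono hτ0 (by linarith [hδ.1])
    (QG_mul_mem (by linarith [hδ.2]) hτ (hzpow q₁ hq₁ ε₁ hε₁) (hzpow q₂ hq₂ ε₂ hε₂))
end

section
/- Let G be a topological group equipped with a Borel measure μ that is invariant under right translations (μ(E·g) = μ(E) for all Borel E and g ∈ G). Let Γ be a subgroup of G, let B ⊆ G be any subset, let W ⊆ G be a Borel measurable set, and let Δ be a finite subset of Γ ∩ B such that the right translates {W·δ : δ ∈ Δ} are pairwise disjoint. Then μ(W)·|Δ|² ≤ ∫⁻_{g ∈ G} 1_{W·B}(g) · #(Γ ∩ g^{-1}·(W·B)) dμ(g), where W·B = {w·b : w ∈ W, b ∈ B}, #(·) ∈ [0, ∞] denotes extended cardinality, and ∫⁻ is the lower Lebesgue integral of a nonnegative extended-real-valued function. -/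
open MeasureTheory
open scoped Pointwise ENNReal

/-!
On `S = ⋃ δ ∈ Δ, W·δ` the counting function is at least `|Δ|`: for `g ∈ W·δ` the translate
`δ⁻¹·Δ` lies in `Γ ∩ g⁻¹·(W·B)`. Since the `W·δ` are disjoint right translates of `W`,
`μ(S) = |Δ|·μ(W)`, so integrating the bound over `S` gives `|Δ|·|Δ|·μ(W)`.
-/

section Group

variable {G : Type*} [Group G]

theorem Set.mul_singleton_eq_preimage_mul_inv (W : Set G) (δ : G) :
    W * {δ} = (· * δ⁻¹) ⁻¹' W := by
  rw [Set.mul_singleton, Set.image_mul_right]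

theorem Subgroup.inv_smul_subset_inter_inv_smul_mul {Γ : Subgroup G} {B W Δ : Set G}
    (hΔ : Δ ⊆ (Γ : Set G) ∩ B) {δ g : G} (hδ : δ ∈ Γ) (hg : g ∈ W * {δ}) :
    δ⁻¹ • Δ ⊆ (Γ : Set G) ∩ g⁻¹ • (W * B) := by
  obtain ⟨w, hw, _, rfl, rfl⟩ := hg
  rintro _ ⟨δ', hδ', rfl⟩
  refine ⟨Γ.mul_mem (Γ.inv_mem hδ) (hΔ hδ').1, ?_⟩
  simp only [Set.mem_inv_smul_set_iff, smul_eq_mul, mul_assoc, mul_inv_cancel_left]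
  exact Set.mul_mem_mul hw (hΔ hδ').2

theorem Subgroup.indicator_biUnion_mul_singleton_le (Γ : Subgroup G) (B W : Set G)
    (Δ : Finset G) (hΔ : (Δ : Set G) ⊆ (Γ : Set G) ∩ B) :
    (⋃ δ ∈ Δ, W * {δ}).indicator (fun _ => (Δ.card : ℝ≥0∞)) ≤
      (W * B).indicator (fun g => (((Γ : Set G) ∩ g⁻¹ • (W * B)).encard : ℝ≥0∞)) := by
  intro g
  by_cases hg : g ∈ ⋃ δ ∈ Δ, W * {δ}
  · obtain ⟨δ, hδΔ, hgδ⟩ := Set.mem_iUnion₂.1 hg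
    have hgWB : g ∈ W * B :=
      Set.mul_subset_mul_left (Set.singleton_subset_iff.2 (hΔ hδΔ).2) hgδ
    have hcard : (Δ : Set G).encard ≤ ((Γ : Set G) ∩ g⁻¹ • (W * B)).encard := by
      simpa only [Set.encard_smul_set] using Set.encard_le_encard
        (inv_smul_subset_inter_inv_smul_mul hΔ (hΔ hδΔ).1 hgδ)
    rw [Set.indicator_of_mem hg, Set.indicator_of_mem hgWB]
    rw [Set.encard_coe_eq_coe_finsetCard] at hcard
    simpa only [ENat.toENNReal_coe] using ENat.toENNReal_le.2 hcard
  · rw [Set.indicator_of_notMem hg]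
    exact zero_le

end Group

section Measure

variable {G : Type*} [Group G] [MeasurableSpace G] [MeasurableMul G]

theorem MeasurableSet.mul_singleton {W : Set G} (hW : MeasurableSet W) (δ : G) :
    MeasurableSet (W * {δ}) := by
  rw [Set.mul_singleton_eq_preimage_mul_inv]
  exact measurable_mul_const _ hW

theorem MeasureTheory.measure_mul_singleton (μ : Measure G) [μ.IsMulRightInvariant]
    (W : Set G) (δ : G) : μ (W * {δ}) = μ W := by
  rw [Set.mul_singleton_eq_preimage_mul_inv, measure_preimage_mul_right]

theorem MeasureTheory.measure_biUnion_mul_singleton (μ : Measure G) [μ.IsMulRightInvariant]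
    {W : Set G} (hW : MeasurableSet W) (Δ : Finset G)
    (hdisj : (Δ : Set G).PairwiseDisjoint (fun δ => W * {δ})) :
    μ (⋃ δ ∈ Δ, W * {δ}) = Δ.card * μ W := by
  rw [measure_biUnion_finset hdisj fun δ _ => hW.mul_singleton δ]
  simp only [measure_mul_singleton, Finset.sum_const, nsmul_eq_mul]

end Measure

/-- The unfolding counting inequality: if the right translates `W·δ`, `δ ∈ Δ`,
are pairwise disjoint, then
`μ(W)·|Δ|² ≤ ∫⁻_g 1_{W·B}(g) · #(Γ ∩ g⁻¹·(W·B)) dμ(g)`. -/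
theorem counting_unfolding {G : Type*} [Group G] [TopologicalSpace G] [IsTopologicalGroup G]
    [MeasurableSpace G] [BorelSpace G]
    (μ : Measure G) [μ.IsMulRightInvariant]
    (Γ : Subgroup G) (B W : Set G) (hW : MeasurableSet W)
    (Δ : Finset G) (hΔ : (Δ : Set G) ⊆ (Γ : Set G) ∩ B)
    (hdisj : ∀ δ₁ ∈ Δ, ∀ δ₂ ∈ Δ, δ₁ ≠ δ₂ →
      Disjoint (W * ({δ₁} : Set G)) (W * ({δ₂} : Set G))) :
    μ W * (Δ.card : ℝ≥0∞) ^ 2 ≤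
      ∫⁻ g, (W * B).indicator
        (fun g => (((Γ : Set G) ∩ (g⁻¹ • (W * B))).encard : ℝ≥0∞)) g ∂μ := by
  have hS : MeasurableSet (⋃ δ ∈ Δ, W * {δ}) :=
    Finset.measurableSet_biUnion Δ fun δ _ => hW.mul_singleton δ
  calc μ W * (Δ.card : ℝ≥0∞) ^ 2
      = Δ.card * μ (⋃ δ ∈ Δ, W * {δ}) := by
        rw [measure_biUnion_mul_singleton μ hW Δ hdisj]; ring
    _ = ∫⁻ g, (⋃ δ ∈ Δ, W * {δ}).indicator (fun _ => (Δ.card : ℝ≥0∞)) g ∂μ :=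
        (lintegral_indicator_const hS _).symm
    _ ≤ _ := lintegral_mono (Γ.indicator_biUnion_mul_singleton_le B W Δ hΔ)
end

section
/- For every positive integer n there exist constants C > 0 and κ > 0 with the following property: for every g ∈ GL_n(ℤ) such that the complex matrix obtained from g by casting its entries into ℂ has an eigenvalue λ with |λ| ≠ 1, and for every real T ≥ 2, the number of integers k ∈ ℤ with ‖g^k‖ ≤ T is at most C·(log T)^κ. Here ‖·‖ denotes the maximum of the absolute values of the matrix entries, and g^k denotes the k-th power of g in the group GL_n(ℤ) (so negative powers are allowed). -/
/-!
Since `det g = ±1`, the moduli of the eigenvalues of `g` multiply to `1`, so an eigenvalue off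
the unit circle forces an eigenvalue `μ` with `|μ| > 1`. The characteristic polynomial of `g` is
monic of degree `n` over `ℤ`; when all its roots lie in the disc of radius `2` its coefficients
are bounded, so it is one of finitely many polynomials. Hence `|μ| ≥ δ` for some `δ > 1` depending
only on `n` (Kronecker-type gap). As `μ^k` is an eigenvalue of `g^k`, `δ^k ≤ n ‖g^k‖` for `k ≥ 0`,
so `‖g^k‖ ≤ T` forces `k = O(log T)`; negative `k` are handled by applying this to `g⁻¹`.
-/

open scoped MatrixGroups NNReal
open Polynomial

theorem Set.Finite.exists_gt_forall_lt_imp_le {α : Type*} [LinearOrder α] [NoMaxOrder α]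
    {s : Set α} (hs : s.Finite) (a : α) : ∃ b > a, ∀ x ∈ s, a < x → b ≤ x := by
  obtain ⟨c, hc⟩ := exists_gt a
  obtain ⟨b, hb, hmin⟩ := ((hs.inter_of_left (Set.Ioi a)).insert c).exists_minimal
    (Set.insert_nonempty c _)
  refine ⟨b, ?_, fun x hx hax => (le_total b x).elim id (hmin (Or.inr ⟨hx, hax⟩))⟩
  rcases hb with rfl | ⟨-, hb⟩
  exacts [hc, hb]

theorem Int.finite_and_ncard_le_of_forall_abs_le {S : Set ℤ} {K : ℝ} (hK : 0 ≤ K)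
    (h : ∀ k ∈ S, |(k : ℝ)| ≤ K) : S.Finite ∧ (S.ncard : ℝ) ≤ 2 * K + 1 := by
  set m : ℤ := (⌊K⌋₊ : ℤ)
  have hsub : S ⊆ (Finset.Icc (-m) m : Set ℤ) := fun k hk => by
    have : |k| ≤ m := Int.le_of_lt_add_one <| by
      exact_mod_cast (h k hk).trans_lt (Nat.lt_floor_add_one K)
    simpa [abs_le] using this
  refine ⟨(Finset.finite_toSet _).subset hsub, ?_⟩
  calc (S.ncard : ℝ) ≤ (Finset.Icc (-m) m).card := by
        exact_mod_cast (Set.ncard_le_ncard hsub (Finset.finite_toSet _)).trans_eq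
          (Set.ncard_coe_finset _)
    _ = 2 * ⌊K⌋₊ + 1 := by
        rw [Int.card_Icc, show (m + 1 - -m).toNat = 2 * ⌊K⌋₊ + 1 by omega]
        push_cast; ring
    _ ≤ 2 * K + 1 := by gcongr; exact Nat.floor_le hK

namespace Polynomial

theorem exists_one_lt_forall_one_lt_norm_root_imp_le (n : ℕ) (B : ℝ) :
    ∃ δ > 1, ∀ f : ℤ[X], f.Monic → f.natDegree ≤ n →
      (∀ z ∈ (f.map (Int.castRingHom ℂ)).roots, ‖z‖ ≤ B) →
      ∀ z ∈ (f.map (Int.castRingHom ℂ)).roots, 1 < ‖z‖ → δ ≤ ‖z‖ := by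
  classical
  set D : ℝ := max B 1 ^ n * n.choose (n / 2)
  have hroots := bUnion_roots_finite (Int.castRingHom ℂ) n (Set.finite_Icc (-⌊D⌋) ⌊D⌋)
  obtain ⟨δ, hδ, hgap⟩ := (hroots.image (‖·‖)).exists_gt_forall_lt_imp_le 1
  refine ⟨δ, hδ, fun f hmon hdeg hB z hz hz1 => hgap _ ⟨z, ?_, rfl⟩ hz1⟩
  have hcoeff (i : ℕ) : |f.coeff i| ≤ ⌊D⌋ := by
    have := coeff_bdd_of_roots_le _ hmon (IsAlgClosed.splits _) hdeg hB i
    rw [coeff_map, eq_intCast, Complex.norm_intCast] at this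
    exact Int.le_floor.mpr (by exact_mod_cast this)
  exact Set.mem_iUnion₂.mpr ⟨f, ⟨hdeg, fun i => abs_le.mp (hcoeff i)⟩, by simpa using hz⟩

theorem exists_one_lt_exists_le_norm_root (n : ℕ) :
    ∃ δ > 1, ∀ f : ℤ[X], f.Monic → f.natDegree ≤ n →
      (∃ z ∈ (f.map (Int.castRingHom ℂ)).roots, 1 < ‖z‖) →
      ∃ z ∈ (f.map (Int.castRingHom ℂ)).roots, δ ≤ ‖z‖ := by
  obtain ⟨δ, hδ, hgap⟩ := exists_one_lt_forall_one_lt_norm_root_imp_le n 2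
  refine ⟨min δ 2, lt_min hδ one_lt_two, fun f hmon hdeg ⟨z, hz, hz1⟩ => ?_⟩
  by_cases hB : ∀ w ∈ (f.map (Int.castRingHom ℂ)).roots, ‖w‖ ≤ 2
  · exact ⟨z, hz, (min_le_left _ _).trans (hgap f hmon hdeg hB z hz hz1)⟩
  · push Not at hB
    obtain ⟨w, hw, hw2⟩ := hB
    exact ⟨w, hw, (min_le_right _ _).trans hw2.le⟩

end Polynomial

namespace Matrix

variable {ι : Type*} [Fintype ι] [DecidableEq ι]

theorem mem_spectrum_of_mulVec_eq_smul {K : Type*} [Field K] {A : Matrix ι ι K} {v : ι → K}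
    {μ : K} (hv : v ≠ 0) (h : A *ᵥ v = μ • v) : μ ∈ spectrum K A := by
  rw [mem_spectrum_iff_isRoot_charpoly, IsRoot, eval_charpoly, ← exists_mulVec_eq_zero_iff]
  refine ⟨v, hv, ?_⟩
  ext i
  simp [sub_mulVec, h]

theorem exists_mem_spectrum_one_lt_norm {A : Matrix ι ι ℂ} (hdet : ‖A.det‖ = 1) {μ : ℂ}
    (hμ : μ ∈ spectrum ℂ A) (hμ1 : ‖μ‖ ≠ 1) : ∃ ν ∈ spectrum ℂ A, 1 < ‖ν‖ := by
  by_contra! hle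
  obtain ⟨s, hs⟩ : ∃ s, A.charpoly.roots = μ ::ₘ s := Multiset.exists_cons_of_mem
    ((mem_roots A.charpoly_monic.ne_zero).mpr (mem_spectrum_iff_isRoot_charpoly.mp hμ))
  have hs1 : ∀ ν ∈ s.map (‖·‖₊), ν ≤ 1 := by
    simp only [Multiset.mem_map]
    rintro _ ⟨ν, hν, rfl⟩
    exact hle ν (mem_spectrum_iff_isRoot_charpoly.mpr
      (isRoot_of_mem_roots (hs ▸ Multiset.mem_cons_of_mem hν)))
  have : ‖A.det‖₊ < 1 := calc
    ‖A.det‖₊ = ‖μ‖₊ * (s.map (‖·‖₊)).prod := by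
      rw [det_eq_prod_roots_charpoly, hs, Multiset.prod_cons, nnnorm_mul]
      exact congrArg (‖μ‖₊ * ·) (map_multiset_prod (nnnormHom : ℂ →*₀ ℝ≥0) s)
    _ ≤ ‖μ‖₊ * 1 := by
      gcongr
      simpa using Multiset.prod_le_pow_card _ 1 hs1
    _ < 1 := by simpa [← NNReal.coe_lt_one] using (hle μ hμ).lt_of_ne hμ1
  exact this.ne (by simpa [← NNReal.coe_eq_one] using hdet)

attribute [local instance] Matrix.linftyOpNormedRing Matrix.linftyOpNormedAlgebra in
theorem norm_le_card_mul_of_mem_spectrum {A : Matrix ι ι ℂ} {μ : ℂ} (hμ : μ ∈ spectrum ℂ A)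
    {R : ℝ} (hR : ∀ i j, ‖A i j‖ ≤ R) : ‖μ‖ ≤ Fintype.card ι * R := by
  obtain ⟨i₀⟩ : Nonempty ι := by
    by_contra h
    rw [not_nonempty_iff] at h
    simp [spectrum.of_subsingleton] at hμ
  have : Nonempty ι := ⟨i₀⟩
  lift R to ℝ≥0 using (norm_nonneg _).trans (hR i₀ i₀)
  calc ‖μ‖ ≤ ‖A‖ := spectrum.norm_le_norm_of_mem hμ
    _ ≤ Fintype.card ι * R := by
      rw [linfty_opNorm_def]
      norm_cast
      refine Finset.sup_le fun i _ => ?_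
      have := Finset.sum_le_card_nsmul Finset.univ (fun j => ‖A i j‖₊) R fun j _ => hR i j
      rwa [Finset.card_univ, nsmul_eq_mul] at this

end Matrix

namespace Matrix.GeneralLinearGroup

variable {ι : Type*} [Fintype ι] [DecidableEq ι]

def HasEigenvalueOffUnitCircle (g : GL ι ℤ) : Prop :=
  ∃ μ ∈ spectrum ℂ (map (Int.castRingHom ℂ) g : Matrix ι ι ℂ), ‖μ‖ ≠ 1

theorem HasEigenvalueOffUnitCircle.inv {g : GL ι ℤ} (hg : g.HasEigenvalueOffUnitCircle) :
    g⁻¹.HasEigenvalueOffUnitCircle := by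
  obtain ⟨μ, hμ, hμ1⟩ := hg
  have hμ0 : μ ≠ 0 := fun h => (map (Int.castRingHom ℂ) g).zero_notMem_spectrum ℂ (h ▸ hμ)
  refine ⟨μ⁻¹, ?_, by rwa [norm_inv, ne_eq, inv_eq_one]⟩
  rw [map_inv]
  exact (spectrum.inv_mem_iff (r := Units.mk0 μ hμ0)).mp hμ

theorem norm_det_map_eq_one (g : GL ι ℤ) :
    ‖(map (Int.castRingHom ℂ) g : Matrix ι ι ℂ).det‖ = 1 := by
  rw [val_map_apply, ← RingHom.mapMatrix_apply, ← RingHom.map_det, eq_intCast,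
    Complex.norm_intCast, ← Int.cast_abs,
    Int.isUnit_iff_abs_eq.mp (isUnits_det_units g), Int.cast_one]

theorem exists_one_lt_forall_exists_le_norm_mem_spectrum :
    ∃ δ > 1, ∀ g : GL ι ℤ, g.HasEigenvalueOffUnitCircle →
      ∃ μ ∈ spectrum ℂ (map (Int.castRingHom ℂ) g : Matrix ι ι ℂ), δ ≤ ‖μ‖ := by
  obtain ⟨δ, hδ, hgap⟩ := exists_one_lt_exists_le_norm_root (Fintype.card ι)
  refine ⟨δ, hδ, fun g ⟨μ, hμ, hμ1⟩ => ?_⟩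
  have hcharpoly : (g : Matrix ι ι ℤ).charpoly.map (Int.castRingHom ℂ) =
      (map (Int.castRingHom ℂ) g : Matrix ι ι ℂ).charpoly := by
    rw [val_map_apply, charpoly_map]
  have hmem {ν : ℂ} : ν ∈ ((g : Matrix ι ι ℤ).charpoly.map (Int.castRingHom ℂ)).roots ↔
      ν ∈ spectrum ℂ (map (Int.castRingHom ℂ) g : Matrix ι ι ℂ) := by
    rw [hcharpoly, mem_spectrum_iff_isRoot_charpoly, mem_roots (charpoly_monic _).ne_zero]
  obtain ⟨ν, hν, hν1⟩ := exists_mem_spectrum_one_lt_norm (norm_det_map_eq_one g) hμ hμ1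
  obtain ⟨z, hz, hδz⟩ := hgap _ (charpoly_monic _) (charpoly_natDegree_eq_dim _).le
    ⟨ν, hmem.mpr hν, hν1⟩
  exact ⟨z, hmem.mp hz, hδz⟩

theorem norm_pow_le_card_mul {g : GL ι ℤ} {μ : ℂ}
    (hμ : μ ∈ spectrum ℂ (map (Int.castRingHom ℂ) g : Matrix ι ι ℂ)) {m : ℕ} {T : ℝ}
    (hT : ∀ i j, (|((g ^ m : GL ι ℤ) : Matrix ι ι ℤ) i j| : ℝ) ≤ T) :
    ‖μ‖ ^ m ≤ Fintype.card ι * T := by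
  rw [← norm_pow]
  refine norm_le_card_mul_of_mem_spectrum
    (A := (map (Int.castRingHom ℂ) (g ^ m) : Matrix ι ι ℂ)) ?_ fun i j => ?_
  · rw [map_pow, Units.val_pow_eq_pow_val]
    exact spectrum.pow_mem_pow _ m hμ
  · rw [val_map_apply, map_apply, Int.coe_castRingHom, Complex.norm_intCast]
    exact hT i j

theorem natCast_mul_log_le_of_abs_pow_le {g : GL ι ℤ} {μ : ℂ}
    (hμ : μ ∈ spectrum ℂ (map (Int.castRingHom ℂ) g : Matrix ι ι ℂ)) {δ : ℝ} (hδ : 0 < δ)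
    (hδμ : δ ≤ ‖μ‖) {T : ℝ} (hT : 2 ≤ T) {m : ℕ}
    (hm : ∀ i j, (|((g ^ m : GL ι ℤ) : Matrix ι ι ℤ) i j| : ℝ) ≤ T) :
    m * Real.log δ ≤ (Fintype.card ι + 1) * Real.log T := by
  set d := Fintype.card ι
  have hδT : δ ^ m ≤ T ^ (d + 1) := calc
    δ ^ m ≤ ‖μ‖ ^ m := by gcongr
    _ ≤ d * T := norm_pow_le_card_mul hμ hm
    _ ≤ T ^ d * T := by
      gcongr
      calc (d : ℝ) ≤ 2 ^ d := by exact_mod_cast d.lt_two_pow_self.le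
        _ ≤ T ^ d := by gcongr
    _ = T ^ (d + 1) := (pow_succ T d).symm
  have := Real.log_le_log (by positivity) hδT
  rwa [Real.log_pow, Real.log_pow, Nat.cast_succ] at this

theorem exists_forall_abs_le_mul_log_of_abs_zpow_le :
    ∃ c > 0, ∀ g : GL ι ℤ, g.HasEigenvalueOffUnitCircle → ∀ T : ℝ, 2 ≤ T → ∀ k : ℤ,
      (∀ i j, (|((g ^ k : GL ι ℤ) : Matrix ι ι ℤ) i j| : ℝ) ≤ T) →
      |(k : ℝ)| ≤ c * Real.log T := by
  obtain ⟨δ, hδ, hbig⟩ := exists_one_lt_forall_exists_le_norm_mem_spectrum (ι := ι)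
  have hlogδ : 0 < Real.log δ := Real.log_pos hδ
  refine ⟨(Fintype.card ι + 1) / Real.log δ, by positivity, fun g hg T hT k hk => ?_⟩
  have hnat {g : GL ι ℤ} (hg : g.HasEigenvalueOffUnitCircle) {m : ℕ}
      (hm : ∀ i j, (|((g ^ m : GL ι ℤ) : Matrix ι ι ℤ) i j| : ℝ) ≤ T) :
      (m : ℝ) ≤ (Fintype.card ι + 1) / Real.log δ * Real.log T := by
    obtain ⟨μ, hμ, hδμ⟩ := hbig g hg
    rw [div_mul_eq_mul_div, le_div_iff₀ hlogδ]
    exact natCast_mul_log_le_of_abs_pow_le hμ (by linarith) hδμ hT hm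
  obtain ⟨m, rfl | rfl⟩ := Int.eq_nat_or_neg k
  · simp only [zpow_natCast] at hk
    simpa using hnat hg hk
  · simp only [_root_.zpow_neg, zpow_natCast, ← inv_pow] at hk
    simpa using hnat hg.inv hk

end Matrix.GeneralLinearGroup

theorem hyperbolic_power_count_general (n : ℕ) :
    ∃ C > (0 : ℝ), ∃ κ > (0 : ℝ),
      ∀ g : GL (Fin n) ℤ,
        (∃ (lam : ℂ) (v : Fin n → ℂ), v ≠ 0 ∧
            ((g : Matrix (Fin n) (Fin n) ℤ).map (Int.cast : ℤ → ℂ)).mulVec v = lam • v ∧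
            ‖lam‖ ≠ 1) →
        ∀ T : ℝ, 2 ≤ T →
          {k : ℤ | ∀ i j,
              (|((g ^ k : GL (Fin n) ℤ) : Matrix (Fin n) (Fin n) ℤ) i j| : ℝ) ≤ T}.Finite ∧
          (({k : ℤ | ∀ i j,
              (|((g ^ k : GL (Fin n) ℤ) : Matrix (Fin n) (Fin n) ℤ) i j| : ℝ) ≤ T}.ncard : ℝ)
            ≤ C * Real.log T ^ κ) := by
  obtain ⟨c, hc, hbound⟩ :=
    Matrix.GeneralLinearGroup.exists_forall_abs_le_mul_log_of_abs_zpow_le (ι := Fin n)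
  have hlog2 : 0 < Real.log 2 := Real.log_pos one_lt_two
  refine ⟨2 * c + 1 / Real.log 2, by positivity, 1, one_pos,
    fun g ⟨lam, v, hv, hgv, hlam⟩ T hT => ?_⟩
  have hg : g.HasEigenvalueOffUnitCircle :=
    ⟨lam, Matrix.mem_spectrum_of_mulVec_eq_smul hv hgv, hlam⟩
  have hlogT : Real.log 2 ≤ Real.log T := Real.log_le_log two_pos hT
  obtain ⟨hfin, hcard⟩ := Int.finite_and_ncard_le_of_forall_abs_le
    (mul_nonneg hc.le (hlog2.le.trans hlogT)) fun k hk => hbound g hg T hT k hk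
  refine ⟨hfin, hcard.trans ?_⟩
  rw [Real.rpow_one, add_mul, one_div_mul_eq_div, mul_assoc]
  gcongr
  rwa [one_le_div hlog2]

/-- Logarithmic growth of powers of a hyperbolic integer matrix: if `g ∈ GL_n(ℤ)`
has a complex eigenvalue of modulus `≠ 1`, then for `T ≥ 2` the number of `k ∈ ℤ`
with `‖g^k‖ ≤ T` is at most `C·(log T)^κ`. -/
theorem hyperbolic_power_count (n : ℕ) (hn : 0 < n) :
    ∃ C > (0 : ℝ), ∃ κ > (0 : ℝ),
      ∀ g : GL (Fin n) ℤ,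
        (∃ (lam : ℂ) (v : Fin n → ℂ), v ≠ 0 ∧
            ((g : Matrix (Fin n) (Fin n) ℤ).map (Int.cast : ℤ → ℂ)).mulVec v = lam • v ∧
            ‖lam‖ ≠ 1) →
        ∀ T : ℝ, 2 ≤ T →
          {k : ℤ | ∀ i j,
              (|((g ^ k : GL (Fin n) ℤ) : Matrix (Fin n) (Fin n) ℤ) i j| : ℝ) ≤ T}.Finite ∧
          (({k : ℤ | ∀ i j,
              (|((g ^ k : GL (Fin n) ℤ) : Matrix (Fin n) (Fin n) ℤ) i j| : ℝ) ≤ T}.ncard : ℝ)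
            ≤ C * Real.log T ^ κ) :=
  hyperbolic_power_count_general n
end
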